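/- Let u, v be two vertices of a simple connected graph G of order n, and let v₁, v₂, …, v_s (1 ≤ s ≤ d(v)) be vertices in N_G(v) \ N_G(u), each different from u. Let G′ = G − vv₁ − vv₂ − ⋯ − vv_s + uv₁ + uv₂ + ⋯ + uv_s, and let f be a harmonic eigenfunction associated with λ₂(G). If f(u) = f(v), then λ₂(G) ≥ λ₂(G′). -/

import Mathlib

/-!
Put `x = D'^{1/2} f`, where `D'` is the degree matrix of `G'`. Since `f(u) = f(v)`, moving the
edges `vvᵢ` to `uvᵢ` changes neither `∑ d(w) f(w)`, nor `∑ d(w) f(w)²`, nor the Dirichlet sum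
`∑_{ab ∈ E} (f(a) - f(b))²`. As `G` is connected, `λ₂(G) > 0`, which forces `∑ d(w) f(w) = 0`;
hence `x` is orthogonal to the null vector `D'^{1/2} 𝟙` of `𝓛(G')` and its Rayleigh quotient
for `𝓛(G')` is `λ₂(G)`. The min-max principle on the plane spanned by these two vectors gives
`λ₂(G') ≤ λ₂(G)`.
-/

open Matrix Finset BigOperators

namespace NLap

variable {V : Type} [Fintype V] [DecidableEq V]

/-- The normalized Laplacian matrix `𝓛(G) = D^{-1/2} (D - A) D^{-1/2}` of a simple graph. -/
noncomputable def normLap (G : SimpleGraph V) [DecidableRel G.Adj] : Matrix V V ℝ :=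
  Matrix.diagonal (fun v => (Real.sqrt (G.degree v : ℝ))⁻¹) * G.lapMatrix ℝ *
    Matrix.diagonal (fun v => (Real.sqrt (G.degree v : ℝ))⁻¹)

/-- The `k`-th smallest eigenvalue (1-indexed, counted with multiplicity) of a real matrix:
the `k`-th element of the sorted multiset of roots of its characteristic polynomial. -/
noncomputable def nthEig (M : Matrix V V ℝ) (k : ℕ) : ℝ :=
  (M.charpoly.roots.sort (· ≤ ·)).getD (k - 1) 0

/-- `λ₂(G)`, the second smallest normalized Laplacian eigenvalue. -/
noncomputable def lambda2 (G : SimpleGraph V) [DecidableRel G.Adj] : ℝ :=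
  nthEig (normLap G) 2

/-- `ρ(𝓛(G)) = λ_n(G)`, the normalized Laplacian spectral radius. -/
noncomputable def rhoL (G : SimpleGraph V) [DecidableRel G.Adj] : ℝ :=
  nthEig (normLap G) (Fintype.card V)

/-- `f` is a harmonic eigenfunction associated with the eigenvalue `lam` of `𝓛(G)`:
`f ≠ 0` and `L f = lam • D f`. -/
def IsHarmonic (G : SimpleGraph V) [DecidableRel G.Adj] (lam : ℝ) (f : V → ℝ) : Prop :=
  f ≠ 0 ∧ G.lapMatrix ℝ *ᵥ f = fun v => lam * ((G.degree v : ℝ) * f v)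

/-- `∑_{uv ∈ E(G)} (f(u) - f(v))²`. -/
noncomputable def edgeSum (G : SimpleGraph V) [DecidableRel G.Adj] (f : V → ℝ) : ℝ :=
  ∑ e ∈ G.edgeFinset, Sym2.lift ⟨fun u v => (f u - f v) ^ 2, fun u v => by ring⟩ e


/-- The graph obtained from `G` by subdividing the edge `uv`:
delete `uv`, add a new vertex `w = Sum.inr ()` and the edges `uw`, `wv`. -/
def subdivide {V : Type} (G : SimpleGraph V) (u v : V) : SimpleGraph (V ⊕ Unit) where
  Adj x y :=
    match x, y with
    | Sum.inl a, Sum.inl b => G.Adj a b ∧ ¬(a = u ∧ b = v) ∧ ¬(a = v ∧ b = u)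
    | Sum.inl a, Sum.inr _ => a = u ∨ a = v
    | Sum.inr _, Sum.inl b => b = u ∨ b = v
    | Sum.inr _, Sum.inr _ => False
  symm := by
    refine ⟨?_⟩
    rintro (a | a) (b | b) h
    · exact ⟨h.1.symm, fun hc => h.2.2 ⟨hc.2, hc.1⟩, fun hc => h.2.1 ⟨hc.2, hc.1⟩⟩
    · exact h
    · exact h
    · exact h
  loopless := by
    refine ⟨?_⟩
    rintro (a | a) h
    · exact G.loopless.irrefl a h.1
    · exact h

instance {V : Type} [DecidableEq V] (G : SimpleGraph V) [DecidableRel G.Adj] (u v : V) :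
    DecidableRel (subdivide G u v).Adj := fun x y => by
  rcases x with a | a <;> rcases y with b | b
  · exact inferInstanceAs (Decidable (G.Adj a b ∧ ¬(a = u ∧ b = v) ∧ ¬(a = v ∧ b = u)))
  · exact inferInstanceAs (Decidable (a = u ∨ a = v))
  · exact inferInstanceAs (Decidable (b = u ∨ b = v))
  · exact inferInstanceAs (Decidable False)

/-- `IsSubdivisionOf H G` : `H` is obtained from `G` (up to isomorphism) by repeatedly
subdividing edges. -/
inductive IsSubdivisionOf : {V W : Type} → SimpleGraph W → SimpleGraph V → Prop
  | iso {V W : Type} {G : SimpleGraph V} {H : SimpleGraph W} :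
      Nonempty (G ≃g H) → IsSubdivisionOf H G
  | step {V W : Type} {G : SimpleGraph V} {H : SimpleGraph W} (u v : V) :
      G.Adj u v → IsSubdivisionOf H (subdivide G u v) → IsSubdivisionOf H G

/-- The graph obtained from `G₁` and `G₂` by identifying `u ∈ V(G₁)` with `v ∈ V(G₂)`;
the merged vertex is `Sum.inl u`. -/
def glue {V₁ V₂ : Type} (G₁ : SimpleGraph V₁) (G₂ : SimpleGraph V₂) (u : V₁) (v : V₂) :
    SimpleGraph (V₁ ⊕ {y : V₂ // y ≠ v}) where
  Adj x y :=
    match x, y with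
    | Sum.inl a, Sum.inl b => G₁.Adj a b
    | Sum.inl a, Sum.inr b => a = u ∧ G₂.Adj v b.1
    | Sum.inr a, Sum.inl b => b = u ∧ G₂.Adj v a.1
    | Sum.inr a, Sum.inr b => G₂.Adj a.1 b.1
  symm := by
    refine ⟨?_⟩
    rintro (a | a) (b | b) h
    · exact h.symm
    · exact h
    · exact h
    · exact h.symm
  loopless := by
    refine ⟨?_⟩
    rintro (a | a) h
    · exact G₁.loopless.irrefl a h
    · exact G₂.loopless.irrefl a.1 h

instance {V₁ V₂ : Type} [DecidableEq V₁] (G₁ : SimpleGraph V₁) (G₂ : SimpleGraph V₂)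
    [DecidableRel G₁.Adj] [DecidableRel G₂.Adj] (u : V₁) (v : V₂) :
    DecidableRel (glue G₁ G₂ u v).Adj := fun x y => by
  rcases x with a | a <;> rcases y with b | b
  · exact inferInstanceAs (Decidable (G₁.Adj a b))
  · exact inferInstanceAs (Decidable (a = u ∧ G₂.Adj v b.1))
  · exact inferInstanceAs (Decidable (b = u ∧ G₂.Adj v a.1))
  · exact inferInstanceAs (Decidable (G₂.Adj a.1 b.1))

/-- The graph `G - vv₁ - ⋯ - vvₛ + uv₁ + ⋯ + uvₛ`, where `S = {v₁, …, vₛ}`. -/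
def shiftEdges {V : Type} [DecidableEq V] (G : SimpleGraph V) (u v : V) (S : Finset V) :
    SimpleGraph V where
  Adj x y := x ≠ y ∧
    ((G.Adj x y ∧ ¬(x = v ∧ y ∈ S) ∧ ¬(y = v ∧ x ∈ S)) ∨ (x = u ∧ y ∈ S) ∨ (y = u ∧ x ∈ S))
  symm := by
    refine ⟨?_⟩
    rintro x y ⟨hxy, h⟩
    refine ⟨hxy.symm, ?_⟩
    rcases h with h | h | h
    · exact Or.inl ⟨h.1.symm, h.2.2, h.2.1⟩
    · exact Or.inr (Or.inr h)
    · exact Or.inr (Or.inl h)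
  loopless := ⟨fun x h => h.1 rfl⟩

instance {V : Type} [DecidableEq V] (G : SimpleGraph V) [DecidableRel G.Adj] (u v : V)
    (S : Finset V) : DecidableRel (shiftEdges G u v S).Adj := fun x y =>
  inferInstanceAs (Decidable (_ ∧ _))

/-- The star on `n + 1` vertices, with center `none`. -/
def starGraph (n : ℕ) : SimpleGraph (Option (Fin n)) where
  Adj i j := (i = none ∧ j ≠ none) ∨ (j = none ∧ i ≠ none)
  symm := by
    refine ⟨?_⟩
    rintro i j (h | h)
    · exact Or.inr h
    · exact Or.inl h
  loopless := by
    refine ⟨?_⟩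
    rintro i (h | h) <;> exact h.2 h.1

instance (n : ℕ) : DecidableRel (starGraph n).Adj := fun i j =>
  inferInstanceAs (Decidable (_ ∨ _))


theorem _root_.List.countP_lt_getD_one_le_one {l : List ℝ} (hl : l.Pairwise (· ≤ ·)) :
    l.countP (· < l.getD 1 0) ≤ 1 := by
  match l, hl with
  | [], _ => simp
  | [_], _ => exact List.countP_le_length.trans (by simp)
  | a :: b :: t, hl =>
    have hbt : ∀ x ∈ t, b ≤ x := (List.pairwise_cons.mp (List.pairwise_cons.mp hl).2).1
    have ht : t.countP (· < b) = 0 := List.countP_eq_zero.mpr fun x hx => by simpa using hbt x hx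
    show (a :: b :: t).countP (· < b) ≤ 1
    rw [List.countP_cons, List.countP_cons_of_neg (by simp), ht]
    split_ifs <;> simp

theorem _root_.List.two_le_countP_le_getD_one {l : List ℝ} (hl : l.Pairwise (· ≤ ·))
    (hlen : 2 ≤ l.length) : 2 ≤ l.countP (· ≤ l.getD 1 0) := by
  match l, hl, hlen with
  | a :: b :: t, hl, _ =>
    have hab : a ≤ b := (List.pairwise_cons.mp hl).1 b (by simp)
    simp [hab]

omit [DecidableEq V] in
theorem _root_.Matrix.IsSymm.dotProduct_mulVec_comm {R : Type*} [CommSemiring R]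
    {M : Matrix V V R} (hM : M.IsSymm) (y z : V → R) : y ⬝ᵥ (M *ᵥ z) = (M *ᵥ y) ⬝ᵥ z := by
  rw [dotProduct_mulVec, ← mulVec_transpose, hM.eq]

section Spectrum

variable {M : Matrix V V ℝ}

theorem _root_.Matrix.IsHermitian.card_filter_eigenvalues_eq_countP (hM : M.IsHermitian)
    (p : ℝ → Prop) [DecidablePred p] :
    #{i | p (hM.eigenvalues i)} = (M.charpoly.roots.sort (· ≤ ·)).countP p := by
  rw [← Multiset.coe_countP, Multiset.sort_eq, hM.roots_charpoly_eq_eigenvalues,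
    Multiset.countP_map, Finset.card_filter, Finset.sum_boole]
  simp only [RCLike.ofReal_real_eq_id, Function.id_comp]
  rfl

theorem _root_.Matrix.IsHermitian.eigenvectorBasis_dotProduct_eigenvectorBasis
    (hM : M.IsHermitian) (i j : V) :
    ⇑(hM.eigenvectorBasis i) ⬝ᵥ ⇑(hM.eigenvectorBasis j) = if i = j then 1 else 0 := by
  rw [← orthonormal_iff_ite.mp hM.eigenvectorBasis.orthonormal i j,
    EuclideanSpace.inner_eq_star_dotProduct]
  simp [dotProduct_comm]

theorem _root_.Matrix.IsHermitian.sum_eigenvectorBasis_dotProduct_mul (hM : M.IsHermitian)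
    (y z : V → ℝ) :
    ∑ i, (⇑(hM.eigenvectorBasis i) ⬝ᵥ y) * (⇑(hM.eigenvectorBasis i) ⬝ᵥ z) = y ⬝ᵥ z := by
  have := hM.eigenvectorBasis.sum_inner_mul_inner (WithLp.toLp 2 y) (WithLp.toLp 2 z)
  simp only [EuclideanSpace.inner_eq_star_dotProduct] at this
  simpa [dotProduct_comm] using this

theorem _root_.Matrix.IsHermitian.sum_eigenvalues_mul_sq (hM : M.IsHermitian) (y : V → ℝ) :
    ∑ i, hM.eigenvalues i * (⇑(hM.eigenvectorBasis i) ⬝ᵥ y) ^ 2 = y ⬝ᵥ (M *ᵥ y) := by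
  rw [← hM.sum_eigenvectorBasis_dotProduct_mul]
  refine Finset.sum_congr rfl fun i _ => ?_
  rw [(isHermitian_iff_isSymm.mp hM).dotProduct_mulVec_comm, hM.mulVec_eigenvectorBasis,
    smul_dotProduct, smul_eq_mul]
  ring

theorem _root_.Matrix.IsHermitian.lt_dotProduct_mulVec_of_eigenvectorBasis_dotProduct_eq_zero
    (hM : M.IsHermitian) {i₀ : V} {R : ℝ} (hR : ∀ i ≠ i₀, R < hM.eigenvalues i) {y : V → ℝ}
    (hy0 : y ≠ 0) (hy : ⇑(hM.eigenvectorBasis i₀) ⬝ᵥ y = 0) : R * (y ⬝ᵥ y) < y ⬝ᵥ (M *ᵥ y) := by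
  rw [← hM.sum_eigenvalues_mul_sq, ← hM.sum_eigenvectorBasis_dotProduct_mul, Finset.mul_sum]
  set c : V → ℝ := fun i => ⇑(hM.eigenvectorBasis i) ⬝ᵥ y
  have hle : ∀ i, R * (c i * c i) ≤ hM.eigenvalues i * c i ^ 2 := by
    intro i
    rcases eq_or_ne i i₀ with rfl | hi
    · simp [c, hy]
    · nlinarith [hR i hi, sq_nonneg (c i)]
  obtain ⟨k, hk⟩ : ∃ k, c k ≠ 0 := by
    by_contra! h
    apply hy0
    rw [← dotProduct_self_eq_zero, ← hM.sum_eigenvectorBasis_dotProduct_mul]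
    simp [c, h]
  have hki₀ : k ≠ i₀ := by rintro rfl; exact hk hy
  refine Finset.sum_lt_sum (fun i _ => hle i) ⟨k, Finset.mem_univ k, ?_⟩
  nlinarith [hR k hki₀, sq_pos_of_ne_zero hk]

theorem exists_forall_ne_nthEig_two_le [Nonempty V] (hM : M.IsHermitian) :
    ∃ i₀, ∀ i ≠ i₀, nthEig M 2 ≤ hM.eigenvalues i := by
  have hcard : #{i | hM.eigenvalues i < nthEig M 2} ≤ 1 := by
    rw [hM.card_filter_eigenvalues_eq_countP (· < nthEig M 2)]
    exact List.countP_lt_getD_one_le_one (Multiset.pairwise_sort _ _)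
  obtain ⟨i₀, hi₀⟩ := Finset.card_le_one_iff_subset_singleton.mp hcard
  refine ⟨i₀, fun i hi => not_lt.mp fun hlt => hi ?_⟩
  simpa using hi₀ (Finset.mem_filter.mpr ⟨Finset.mem_univ i, hlt⟩)

theorem exists_ne_eigenvalues_le_nthEig_two (hM : M.IsHermitian) (hV : 2 ≤ Fintype.card V) :
    ∃ i j, i ≠ j ∧ hM.eigenvalues i ≤ nthEig M 2 ∧ hM.eigenvalues j ≤ nthEig M 2 := by
  have hcard : 1 < #{i | hM.eigenvalues i ≤ nthEig M 2} := by
    rw [hM.card_filter_eigenvalues_eq_countP (· ≤ nthEig M 2)]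
    refine List.two_le_countP_le_getD_one (Multiset.pairwise_sort _ _) ?_
    rw [Multiset.length_sort, hM.roots_charpoly_eq_eigenvalues]
    simpa using hV
  obtain ⟨i, hi, j, hj, hij⟩ := Finset.one_lt_card.mp hcard
  exact ⟨i, j, hij, (Finset.mem_filter.mp hi).2, (Finset.mem_filter.mp hj).2⟩

/-- The case `k = 2` of the Courant–Fischer min-max principle. -/
theorem nthEig_two_le_of_linearIndependent (hM : M.IsHermitian) {a b : V → ℝ}
    (hab : LinearIndependent ℝ ![a, b]) {R : ℝ}
    (hR : ∀ s t : ℝ, (s • a + t • b) ⬝ᵥ (M *ᵥ (s • a + t • b)) ≤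
      R * ((s • a + t • b) ⬝ᵥ (s • a + t • b))) :
    nthEig M 2 ≤ R := by
  by_contra! hlt
  have : Nonempty V := by
    obtain ⟨w, -⟩ := Function.ne_iff.mp (hab.ne_zero 0)
    exact ⟨w⟩
  obtain ⟨i₀, hi₀⟩ := exists_forall_ne_nthEig_two_le hM
  set e := ⇑(hM.eigenvectorBasis i₀)
  -- `e` spans the only eigendirection with eigenvalue below `λ₂`; a nonzero vector of
  -- `span {a, b}` orthogonal to it violates `hR`.
  obtain ⟨s, t, hy0, hy⟩ : ∃ s t : ℝ, s • a + t • b ≠ 0 ∧ e ⬝ᵥ (s • a + t • b) = 0 := by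
    by_cases h : e ⬝ᵥ a = 0 ∧ e ⬝ᵥ b = 0
    · exact ⟨1, 0, by simpa using hab.ne_zero 0, by simp [h.1]⟩
    · refine ⟨e ⬝ᵥ b, -(e ⬝ᵥ a), fun h0 => h ?_, ?_⟩
      · obtain ⟨hb, ha⟩ := LinearIndependent.pair_iff.mp hab _ _ h0
        exact ⟨neg_eq_zero.mp ha, hb⟩
      · simp only [dotProduct_add, dotProduct_smul, smul_eq_mul]
        ring
  exact (hR s t).not_gt (hM.lt_dotProduct_mulVec_of_eigenvectorBasis_dotProduct_eq_zero
    (fun i hi => hlt.trans_le (hi₀ i hi)) hy0 hy)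

theorem nthEig_two_le_of_mulVec_eq_zero (hM : M.IsHermitian) {φ x : V → ℝ} (hφ : φ ≠ 0)
    (hx : x ≠ 0) (horth : φ ⬝ᵥ x = 0) (hMφ : M *ᵥ φ = 0) {R : ℝ} (hR : 0 ≤ R)
    (hRx : x ⬝ᵥ (M *ᵥ x) ≤ R * (x ⬝ᵥ x)) : nthEig M 2 ≤ R := by
  have hφφ : 0 < φ ⬝ᵥ φ := by simpa using dotProduct_self_star_pos_iff.mpr hφ
  have hxx : 0 < x ⬝ᵥ x := by simpa using dotProduct_self_star_pos_iff.mpr hx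
  have hφMx : φ ⬝ᵥ (M *ᵥ x) = 0 := by
    rw [(isHermitian_iff_isSymm.mp hM).dotProduct_mulVec_comm, hMφ, zero_dotProduct]
  refine nthEig_two_le_of_linearIndependent hM (a := φ) (b := x)
    (LinearIndependent.pair_iff.mpr fun s t h => ?_) fun s t => ?_
  · have hs := congrArg (φ ⬝ᵥ ·) h
    have ht := congrArg (x ⬝ᵥ ·) h
    simp only [dotProduct_add, dotProduct_smul, smul_eq_mul, dotProduct_zero, horth,
      dotProduct_comm x φ] at hs ht
    constructor <;> nlinarith
  · simp only [mulVec_add, mulVec_smul, hMφ, smul_zero, zero_add, dotProduct_add, add_dotProduct,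
      dotProduct_smul, smul_dotProduct, smul_eq_mul, hφMx, horth, dotProduct_comm x φ, mul_zero,
      add_zero]
    nlinarith [mul_le_mul_of_nonneg_left hRx (sq_nonneg t),
      mul_nonneg hR (mul_nonneg (sq_nonneg s) hφφ.le)]

end Spectrum

section Laplacian

variable {R : Type*} [NonAssocRing R] (G : SimpleGraph V) [DecidableRel G.Adj]

theorem _root_.SimpleGraph.lapMatrix_mulVec_apply_eq_zero_of_degree_eq_zero {w : V}
    (hw : G.degree w = 0) (g : V → R) : (G.lapMatrix R *ᵥ g) w = 0 := by
  rw [SimpleGraph.lapMatrix_mulVec_apply, Finset.card_eq_zero.mp hw]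
  simp [hw]

theorem _root_.SimpleGraph.lapMatrix_mulVec_congr {g h : V → R}
    (hgh : ∀ w, G.degree w ≠ 0 → g w = h w) : G.lapMatrix R *ᵥ g = G.lapMatrix R *ᵥ h := by
  ext w
  by_cases hw : G.degree w = 0
  · rw [G.lapMatrix_mulVec_apply_eq_zero_of_degree_eq_zero hw,
      G.lapMatrix_mulVec_apply_eq_zero_of_degree_eq_zero hw]
  · rw [SimpleGraph.lapMatrix_mulVec_apply, SimpleGraph.lapMatrix_mulVec_apply, hgh w hw]
    congr 1
    refine Finset.sum_congr rfl fun z hz => hgh z ?_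
    exact (G.degree_pos_iff_exists_adj z).mpr ⟨w, ((G.mem_neighborFinset w z).mp hz).symm⟩ |>.ne'

end Laplacian

section NormalizedLaplacian

variable (G : SimpleGraph V) [DecidableRel G.Adj]

theorem normLap_posSemidef : (normLap G).PosSemidef := by
  simpa [normLap, Matrix.diagonal_conjTranspose] using
    (SimpleGraph.posSemidef_lapMatrix ℝ G).mul_mul_conjTranspose_same
      (Matrix.diagonal fun w => (√(G.degree w : ℝ))⁻¹)

/-- At an isolated vertex `(√0)⁻¹ = 0`, which is harmless because the Laplacian has a zero row
and column there. -/
theorem normLap_mulVec_sqrt_degree_mul (g : V → ℝ) :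
    normLap G *ᵥ (fun w => √(G.degree w : ℝ) * g w) =
      fun w => (√(G.degree w : ℝ))⁻¹ * (G.lapMatrix ℝ *ᵥ g) w := by
  ext w
  rw [normLap, ← mulVec_mulVec, ← mulVec_mulVec, mulVec_diagonal]
  refine congrArg _ (congrFun (G.lapMatrix_mulVec_congr fun z hz => ?_) w)
  rw [mulVec_diagonal]
  exact inv_mul_cancel_left₀ (by positivity) _

theorem normLap_mulVec_sqrt_degree : normLap G *ᵥ (fun w => √(G.degree w : ℝ)) = 0 := by
  simpa [SimpleGraph.lapMatrix_mulVec_const_eq_zero, Pi.zero_def] using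
    normLap_mulVec_sqrt_degree_mul G fun _ => 1

omit [DecidableEq V] in
theorem dotProduct_sqrt_degree_mul (g h : V → ℝ) :
    (fun w => √(G.degree w : ℝ) * g w) ⬝ᵥ (fun w => √(G.degree w : ℝ) * h w) =
      ∑ w, (G.degree w : ℝ) * (g w * h w) := by
  refine Finset.sum_congr rfl fun w _ => ?_
  linear_combination (g w * h w) * Real.mul_self_sqrt (Nat.cast_nonneg (G.degree w))

theorem dotProduct_normLap_mulVec_sqrt_degree_mul (g : V → ℝ) :
    (fun w => √(G.degree w : ℝ) * g w) ⬝ᵥ (normLap G *ᵥ fun w => √(G.degree w : ℝ) * g w) =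
      g ⬝ᵥ (G.lapMatrix ℝ *ᵥ g) := by
  rw [normLap_mulVec_sqrt_degree_mul]
  refine Finset.sum_congr rfl fun w _ => ?_
  by_cases hw : G.degree w = 0
  · simp [G.lapMatrix_mulVec_apply_eq_zero_of_degree_eq_zero hw]
  · have : √(G.degree w : ℝ) ≠ 0 := by positivity
    field_simp

theorem eq_sqrt_degree_mul_of_normLap_mulVec_eq_zero [Nontrivial V] (hG : G.Connected)
    {y : V → ℝ} (hy : normLap G *ᵥ y = 0) : ∃ c : ℝ, y = fun w => √(G.degree w : ℝ) * c := by
  have hsqrt : ∀ w, √(G.degree w : ℝ) ≠ 0 := fun w =>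
    (Real.sqrt_pos.mpr (Nat.cast_pos.mpr (hG.preconnected.degree_pos_of_nontrivial w))).ne'
  set g : V → ℝ := fun w => y w / √(G.degree w : ℝ)
  have hyg : y = fun w => √(G.degree w : ℝ) * g w := by
    ext w
    exact (mul_div_cancel₀ _ (hsqrt w)).symm
  have hLg : G.lapMatrix ℝ *ᵥ g = 0 := by
    rw [hyg, normLap_mulVec_sqrt_degree_mul] at hy
    ext w
    exact (mul_eq_zero.mp (congrFun hy w)).resolve_left (inv_ne_zero (hsqrt w))
  obtain ⟨w₀⟩ := hG.nonempty
  refine ⟨g w₀, hyg.trans (funext fun w => ?_)⟩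
  rw [(G.lapMatrix_mulVec_eq_zero_iff_forall_reachable).mp hLg w w₀ (hG.preconnected w w₀)]

theorem lambda2_pos [Nontrivial V] (hG : G.Connected) : 0 < lambda2 G := by
  have hL := normLap_posSemidef G
  by_contra! h
  obtain ⟨i, j, hij, hi, hj⟩ := exists_ne_eigenvalues_le_nthEig_two hL.1 Fintype.one_lt_card
  have hker : ∀ k, hL.1.eigenvalues k ≤ lambda2 G →
      ∃ c : ℝ, ⇑(hL.1.eigenvectorBasis k) = fun w => √(G.degree w : ℝ) * c := fun k hk => by
    refine eq_sqrt_degree_mul_of_normLap_mulVec_eq_zero G hG ?_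
    rw [hL.1.mulVec_eigenvectorBasis, le_antisymm (hk.trans h) (hL.eigenvalues_nonneg k),
      zero_smul]
  obtain ⟨c, hc⟩ := hker i hi
  obtain ⟨c', hc'⟩ := hker j hj
  have hii := hL.1.eigenvectorBasis_dotProduct_eigenvectorBasis i i
  have hjj := hL.1.eigenvectorBasis_dotProduct_eigenvectorBasis j j
  have hij' := hL.1.eigenvectorBasis_dotProduct_eigenvectorBasis i j
  simp only [hc, hc', dotProduct_sqrt_degree_mul, ← Finset.sum_mul, if_pos, if_neg hij]
    at hii hjj hij'
  nlinarith

omit [DecidableEq V] in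
theorem sum_degree_mul_self_pos [Nontrivial V] (hG : G.Connected) {f : V → ℝ} (hf : f ≠ 0) :
    0 < ∑ w, (G.degree w : ℝ) * (f w * f w) := by
  obtain ⟨w, hw⟩ := Function.ne_iff.mp hf
  refine Finset.sum_pos' (fun w _ => mul_nonneg (Nat.cast_nonneg _) (mul_self_nonneg _))
    ⟨w, Finset.mem_univ w, ?_⟩
  exact mul_pos (Nat.cast_pos.mpr (hG.preconnected.degree_pos_of_nontrivial w))
    (mul_self_pos.mpr hw)

end NormalizedLaplacian

section Harmonic

variable {G : SimpleGraph V} [DecidableRel G.Adj] {μ : ℝ} {f : V → ℝ}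

theorem IsHarmonic.dotProduct_lapMatrix_mulVec (hf : IsHarmonic G μ f) :
    f ⬝ᵥ (G.lapMatrix ℝ *ᵥ f) = μ * ∑ w, (G.degree w : ℝ) * (f w * f w) := by
  rw [hf.2, dotProduct, Finset.mul_sum]
  exact Finset.sum_congr rfl fun w _ => by ring

theorem IsHarmonic.sum_degree_mul_eq_zero (hf : IsHarmonic G μ f) (hμ : μ ≠ 0) :
    ∑ w, (G.degree w : ℝ) * f w = 0 := by
  have h1 : (fun _ => (1 : ℝ)) ⬝ᵥ (G.lapMatrix ℝ *ᵥ f) = 0 := by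
    rw [(SimpleGraph.isSymm_lapMatrix ℝ G).dotProduct_mulVec_comm,
      SimpleGraph.lapMatrix_mulVec_const_eq_zero, zero_dotProduct]
  rw [hf.2, dotProduct] at h1
  simp only [one_mul, ← Finset.mul_sum] at h1
  exact (mul_eq_zero.mp h1).resolve_left hμ

end Harmonic

section ShiftEdges

variable (G : SimpleGraph V) [DecidableRel G.Adj] {u v : V} {S : Finset V}
  (huv : u ≠ v) (hSv : ∀ x ∈ S, G.Adj v x) (hSu : ∀ x ∈ S, ¬ G.Adj u x) (hu : u ∉ S)
include huv hSv hSu hu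

omit [Fintype V] in
theorem ite_shiftEdges_adj (p : V → V → ℝ) (x y : V) :
    (if (shiftEdges G u v S).Adj x y then p x y else 0) =
      (if G.Adj x y then p x y else 0) - (if x = v ∧ y ∈ S then p x y else 0) -
        (if y = v ∧ x ∈ S then p x y else 0) + (if x = u ∧ y ∈ S then p x y else 0) +
        (if y = u ∧ x ∈ S then p x y else 0) := by
  have hv : v ∉ S := fun h => G.loopless.irrefl v (hSv v h)
  have hSv' : ∀ x ∈ S, G.Adj x v := fun x hx => (hSv x hx).symm
  have hSu' : ∀ x ∈ S, ¬ G.Adj x u := fun x hx h => hSu x hx h.symm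
  by_cases hA : (shiftEdges G u v S).Adj x y
  · rw [if_pos hA]
    obtain ⟨hxy, hA⟩ := hA
    split_ifs <;> grind
  · rw [if_neg hA]
    simp only [shiftEdges, not_and, not_or] at hA
    split_ifs <;> grind [SimpleGraph.Adj.ne]

theorem sum_sum_ite_shiftEdges_adj (p : V → V → ℝ) :
    ∑ x, ∑ y, (if (shiftEdges G u v S).Adj x y then p x y else 0) =
      ∑ x, ∑ y, (if G.Adj x y then p x y else 0) + ∑ z ∈ S, (p u z + p z u - p v z - p z v) := by
  simp only [ite_shiftEdges_adj G huv hSv hSu hu, Finset.sum_add_distrib, Finset.sum_sub_distrib,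
    ite_and, Finset.sum_ite_irrel, Finset.sum_const_zero, Finset.sum_ite_eq', Finset.sum_ite_mem,
    Finset.mem_univ, if_true, Finset.univ_inter]
  ring

theorem sum_degree_shiftEdges_mul {q : V → ℝ} (hq : q u = q v) :
    ∑ w, ((shiftEdges G u v S).degree w : ℝ) * q w = ∑ w, (G.degree w : ℝ) * q w := by
  have hdeg : ∀ (H : SimpleGraph V) [DecidableRel H.Adj],
      ∑ w, (H.degree w : ℝ) * q w = ∑ x, ∑ y, if H.Adj x y then q x else 0 := by
    intro H _
    simp only [SimpleGraph.degree_eq_sum_if_adj, Finset.sum_mul, ite_mul, one_mul, zero_mul]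
  rw [hdeg, hdeg, sum_sum_ite_shiftEdges_adj G huv hSv hSu hu]
  simp [hq]

theorem dotProduct_lapMatrix_shiftEdges {f : V → ℝ} (hf : f u = f v) :
    f ⬝ᵥ ((shiftEdges G u v S).lapMatrix ℝ *ᵥ f) = f ⬝ᵥ (G.lapMatrix ℝ *ᵥ f) := by
  rw [← toLinearMap₂'_apply', ← toLinearMap₂'_apply', SimpleGraph.lapMatrix_toLinearMap₂',
    SimpleGraph.lapMatrix_toLinearMap₂', sum_sum_ite_shiftEdges_adj G huv hSv hSu hu]
  simp [hf]

end ShiftEdges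

theorem stmt13_general {V : Type} [Fintype V] [DecidableEq V] (G : SimpleGraph V) [DecidableRel G.Adj]
    (hG : G.Connected) (u v : V) (huv : u ≠ v) (S : Finset V) (hS : S.Nonempty)
    (hSv : ∀ x ∈ S, G.Adj v x) (hSu : ∀ x ∈ S, ¬ G.Adj u x) (hu : u ∉ S)
    (f : V → ℝ) (hf : IsHarmonic G (lambda2 G) f)
    (hfuv : f u = f v) :
    lambda2 (shiftEdges G u v S) ≤ lambda2 G := by
  have : Nontrivial V := ⟨⟨u, v, huv⟩⟩
  set G' := shiftEdges G u v S
  have hlam := lambda2_pos G hG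
  have hnorm : ∑ w, (G'.degree w : ℝ) * (f w * f w) = ∑ w, (G.degree w : ℝ) * (f w * f w) :=
    sum_degree_shiftEdges_mul G huv hSv hSu hu (by rw [hfuv])
  refine nthEig_two_le_of_mulVec_eq_zero (normLap_posSemidef G').1
    (φ := fun w => √(G'.degree w : ℝ)) (x := fun w => √(G'.degree w : ℝ) * f w)
    ?_ ?_ ?_ (normLap_mulVec_sqrt_degree G') hlam.le ?_
  · obtain ⟨z, hz⟩ := hS
    have hdu : 0 < G'.degree u :=
      (G'.degree_pos_iff_exists_adj u).mpr ⟨z, fun h => hu (h ▸ hz), Or.inr (Or.inl ⟨rfl, hz⟩)⟩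
    exact Function.ne_iff.mpr ⟨u, (Real.sqrt_pos.mpr (Nat.cast_pos.mpr hdu)).ne'⟩
  · intro hx
    have hxx := dotProduct_sqrt_degree_mul G' f f
    rw [hx, zero_dotProduct, hnorm] at hxx
    exact (sum_degree_mul_self_pos G hG hf.1).ne hxx
  · have hφx := dotProduct_sqrt_degree_mul G' (fun _ => 1) f
    simp only [mul_one, one_mul] at hφx
    rw [hφx, sum_degree_shiftEdges_mul G huv hSv hSu hu hfuv, hf.sum_degree_mul_eq_zero hlam.ne']
  · rw [dotProduct_normLap_mulVec_sqrt_degree_mul,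
      dotProduct_lapMatrix_shiftEdges G huv hSv hSu hu hfuv, hf.dotProduct_lapMatrix_mulVec,
      dotProduct_sqrt_degree_mul, hnorm]

/-- Theorem 3.6: let `S = {v₁, …, vₛ}` (`1 ≤ s ≤ d(v)`) consist of neighbours of `v` that are
neither neighbours of `u` nor equal to `u`, and let
`G' = G - vv₁ - ⋯ - vvₛ + uv₁ + ⋯ + uvₛ`. If `f` is a harmonic eigenfunction associated with
`λ₂(G)` and `f(u) = f(v)`, then `λ₂(G) ≥ λ₂(G')`. -/
theorem stmt13 {V : Type} [Fintype V] [DecidableEq V] (G : SimpleGraph V) [DecidableRel G.Adj]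
    (hG : G.Connected) (u v : V) (huv : u ≠ v) (S : Finset V) (hS : S.Nonempty)
    (hSv : ∀ x ∈ S, G.Adj v x) (hSu : ∀ x ∈ S, ¬ G.Adj u x) (hu : u ∉ S)
    (hcard : S.card ≤ G.degree v) (f : V → ℝ) (hf : IsHarmonic G (lambda2 G) f)
    (hfuv : f u = f v) :
    lambda2 (shiftEdges G u v S) ≤ lambda2 G :=
  stmt13_general G hG u v huv S hS hSv hSu hu f hf hfuv

end NLap
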